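/- There exist constants with the following properties, valid for all integers n ≥ 1: for each fixed 1 ≤ p < 3 there is C_p with ‖e_n‖_{L^p(B)} ≤ C_p; there is C with ‖e_n‖_{L³(B)} ≤ C (log(n+1))^{1/3}; and for each fixed p > 3 there is C_p with ‖e_n‖_{L^p(B)} ≤ C_p n^{1−3/p}. -/

import Mathlib

open MeasureTheory ProbabilityTheory Filter Real Set
open scoped Classical

noncomputable section

/-- The unit ball in `ℝ³`. -/
def ballB : Set (EuclideanSpace ℝ (Fin 3)) := Metric.ball 0 1

/-- The `n`-th radial Dirichlet eigenfunction of `-Δ` on the unit ball in `ℝ³`,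
`e_n(x) = (2π)^{-1/2} sin(nπ|x|)/|x|`, extended by continuity at `x = 0`. -/
def en (n : ℕ) (x : EuclideanSpace ℝ (Fin 3)) : ℝ :=
  if x = 0 then (2 * π) ^ (-(1:ℝ)/2) * (n * π)
  else (2 * π) ^ (-(1:ℝ)/2) * Real.sin (n * π * ‖x‖) / ‖x‖

/-- Japanese bracket `⟨x⟩ = (1 + |x|²)^{1/2}`. -/
def jap (x : ℝ) : ℝ := Real.sqrt (1 + x ^ 2)

/-- `L^p` norm over the unit ball of a complex-valued function. -/
def lpNormB (p : ℝ) (f : EuclideanSpace ℝ (Fin 3) → ℂ) : ℝ :=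
  (∫ x in ballB, ‖f x‖ ^ p) ^ (1 / p)

/-- Mixed norm `L^p_x(B; L^q_t([0,T]))`. -/
def lpLqNorm (p q T : ℝ) (F : ℝ → EuclideanSpace ℝ (Fin 3) → ℂ) : ℝ :=
  (∫ x in ballB, ((∫ t in Set.Icc (0:ℝ) T, ‖F t x‖ ^ q) ^ (1/q)) ^ p) ^ (1/p)

/-- `H^s` norm of a function `Σ c_n e_n`, in terms of its coefficients. -/
def hsNorm (s : ℝ) (c : ℕ → ℂ) : ℝ :=
  (∑' n : ℕ, (n:ℝ) ^ (2*s) * ‖c n‖ ^ 2) ^ ((1:ℝ)/2)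

/-- `(g_n)` is a sequence of independent standard complex Gaussian random variables:
independent, with i.i.d. real and imaginary parts distributed as `N(0, 1/2)`
(so that `E|g_n|² = 1`). -/
def IsStdGaussianSeq {Ω : Type*} [MeasurableSpace Ω] (P : Measure Ω) (g : ℕ → Ω → ℂ) : Prop :=
  iIndepFun g P ∧
  ∀ n : ℕ, Measurable (g n) ∧
    Measure.map (fun ω => (g n ω).re) P = gaussianReal 0 (1/2) ∧
    Measure.map (fun ω => (g n ω).im) P = gaussianReal 0 (1/2) ∧
    IndepFun (fun ω => (g n ω).re) (fun ω => (g n ω).im) P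

/-- Real part of the truncated solution `u_N(t,x) = Σ_{n=1}^N c_n(t) e_n(x)`. -/
def reU (N : ℕ) (c : ℕ → ℝ → ℂ) (t : ℝ) (x : EuclideanSpace ℝ (Fin 3)) : ℝ :=
  ∑ m ∈ Finset.Icc 1 N, (c m t).re * en m x

/-- `c` is the coefficient family of a global solution of the truncated nonlinear
wave system `i c_n' = nπ c_n − (nπ)^{-1} ∫_B |Re u_N|^α (Re u_N) e_n dx`,
with data `c_n(0) = g_n/(nπ)`. -/
def IsTruncSol (α : ℝ) (N : ℕ) (g : ℕ → ℂ) (c : ℕ → ℝ → ℂ) : Prop :=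
  (∀ n : ℕ, n ∉ Finset.Icc 1 N → c n = 0) ∧
  ∀ n ∈ Finset.Icc 1 N,
    c n 0 = g n / ((n * π : ℝ) : ℂ) ∧
    ∀ t : ℝ, HasDerivAt (c n)
      (-Complex.I * (((n * π : ℝ) : ℂ) * c n t -
        ((n * π : ℝ) : ℂ)⁻¹ *
          ((∫ x in ballB, |reU N c t x| ^ α * reU N c t x * en n x : ℝ) : ℂ))) t

/-- Coefficients of the free evolution `S(t)(P_N φ^{(ω)})` of the truncated random data. -/
def linCoef (g : ℕ → ℂ) (N n : ℕ) (t : ℝ) : ℂ :=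
  if n ∈ Finset.Icc 1 N then
    g n / ((n * π : ℝ) : ℂ) * Complex.exp (-Complex.I * ((n * π * t : ℝ) : ℂ)) else 0

end

/-! Since `|sin t| ≤ min |t| 1`, the eigenfunction satisfies `|e_n x| ≲ min (nπ) |x|⁻¹`, so in
polar coordinates `‖e_n‖_p^p ≲ ∫₀¹ r² min (nπ) r⁻¹ ^ p dr`. For `p < 3` the majorant `r^(2-p)`
is integrable uniformly in `n`. For `p ≥ 3` the core `r < (nπ)⁻¹` contributes `(nπ)^(p-3)/3`
and the rest `∫ r^(2-p)` over `((nπ)⁻¹, 1)`, which is `log (nπ)` for `p = 3` and at most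
`(nπ)^(p-3)/(p-3)` for `p > 3`. -/

open Metric

theorem setIntegral_ball_fun_norm_addHaar {E F : Type*} [NormedAddCommGroup E] [NormedSpace ℝ E]
    [Nontrivial E] [FiniteDimensional ℝ E] [MeasurableSpace E] [BorelSpace E] [NormedAddCommGroup F]
    [NormedSpace ℝ F] (μ : Measure E) [μ.IsAddHaarMeasure] (f : ℝ → F) (R : ℝ) :
    ∫ x in ball (0 : E) R, f ‖x‖ ∂μ =
      Module.finrank ℝ E • μ.real (ball 0 1) •
        ∫ r in Ioo 0 R, r ^ (Module.finrank ℝ E - 1) • f r := by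
  have hball : ∫ x in ball (0 : E) R, f ‖x‖ ∂μ = ∫ x, (Iio R).indicator f ‖x‖ ∂μ := by
    rw [← integral_indicator measurableSet_ball]
    congr with x
    simp [indicator]
  rw [hball, integral_fun_norm_addHaar, ← Ioi_inter_Iio, ← setIntegral_indicator measurableSet_Iio]
  congr 2
  refine setIntegral_congr_fun measurableSet_Ioi fun r _ => ?_
  by_cases hr : r < R <;> simp [hr]

theorem abs_sin_mul_div_le_min {b r : ℝ} (hb : 0 ≤ b) (hr : 0 < r) :
    |sin (b * r)| / r ≤ min b r⁻¹ := by
  rw [div_le_iff₀ hr, min_mul_of_nonneg _ _ hr.le, inv_mul_cancel₀ hr.ne']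
  refine le_min ?_ (abs_sin_le_one _)
  simpa [abs_of_nonneg (mul_nonneg hb hr.le)] using abs_sin_le_abs (x := b * r)

section RadialProfile

variable {b p : ℝ}

theorem integrableOn_sq_mul_min_inv_rpow (hb : 0 ≤ b) (hp : 0 ≤ p) :
    IntegrableOn (fun r : ℝ => r ^ 2 * min b r⁻¹ ^ p) (Icc 0 1) := by
  refine Measure.integrableOn_of_bounded (M := b ^ p) measure_Icc_lt_top.ne
    (by fun_prop) ((ae_restrict_iff' measurableSet_Icc).mpr (.of_forall fun r hr => ?_))
  have hmin : 0 ≤ min b r⁻¹ := le_min hb (inv_nonneg.mpr hr.1)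
  rw [Real.norm_of_nonneg (by positivity)]
  calc r ^ 2 * min b r⁻¹ ^ p ≤ 1 * b ^ p := by
        gcongr
        · exact pow_le_one₀ hr.1 hr.2
        · exact min_le_left _ _
    _ = b ^ p := one_mul _

theorem intervalIntegrable_sq_mul_min_inv_rpow (hb : 0 ≤ b) (hp : 0 ≤ p) {s t : ℝ}
    (hs : s ∈ Icc (0 : ℝ) 1) (ht : t ∈ Icc (0 : ℝ) 1) :
    IntervalIntegrable (fun r : ℝ => r ^ 2 * min b r⁻¹ ^ p) volume s t :=
  ((integrableOn_sq_mul_min_inv_rpow hb hp).mono_set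
    (uIcc_subset_Icc hs ht)).intervalIntegrable

theorem integral_sq_mul_min_inv_rpow_le_of_lt_three (hb : 0 ≤ b) (hp : 0 ≤ p) (hp3 : p < 3) :
    ∫ r in (0)..1, r ^ 2 * min b r⁻¹ ^ p ≤ (3 - p)⁻¹ := by
  have hrpow : IntervalIntegrable (fun r : ℝ => r ^ (2 - p)) volume 0 1 :=
    intervalIntegral.intervalIntegrable_rpow' (by linarith)
  calc ∫ r in (0)..1, r ^ 2 * min b r⁻¹ ^ p ≤ ∫ r in (0)..1, r ^ (2 - p) := by
        refine intervalIntegral.integral_mono_on_of_le_Ioo zero_le_one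
          (intervalIntegrable_sq_mul_min_inv_rpow hb hp (by simp) (by simp)) hrpow
          fun r hr => ?_
        calc r ^ 2 * min b r⁻¹ ^ p ≤ r ^ 2 * r⁻¹ ^ p := by
              gcongr
              · exact le_min hb (inv_nonneg.mpr hr.1.le)
              · exact min_le_right _ _
          _ = r ^ (2 - p) := by
              rw [Real.inv_rpow hr.1.le, Real.rpow_sub hr.1, Real.rpow_two, div_eq_mul_inv]
    _ = (3 - p)⁻¹ := by
        rw [integral_rpow (.inl (by linarith)), Real.one_rpow, Real.zero_rpow (by linarith)]
        ring

theorem integral_sq_mul_min_inv_rpow_le (hb : 1 ≤ b) (hp : 0 ≤ p) :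
    ∫ r in (0)..1, r ^ 2 * min b r⁻¹ ^ p ≤ b ^ (p - 3) / 3 + ∫ r in b⁻¹..1, r ^ (2 - p) := by
  have hb0 : 0 < b := by linarith
  have hbinv : b⁻¹ ∈ Icc (0 : ℝ) 1 := ⟨by positivity, inv_le_one_of_one_le₀ hb⟩
  have hleft := intervalIntegrable_sq_mul_min_inv_rpow hb0.le hp (s := 0) (by simp) hbinv
  have hright := intervalIntegrable_sq_mul_min_inv_rpow hb0.le hp hbinv (t := 1) (by simp)
  rw [← intervalIntegral.integral_add_adjacent_intervals hleft hright]
  gcongr ?_ + ?_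
  · calc ∫ r in (0)..b⁻¹, r ^ 2 * min b r⁻¹ ^ p ≤ ∫ r in (0)..b⁻¹, b ^ p * r ^ 2 := by
          refine intervalIntegral.integral_mono_on_of_le_Ioo hbinv.1 hleft
            (Continuous.intervalIntegrable (by fun_prop) _ _) fun r hr => ?_
          rw [mul_comm]
          gcongr
          · exact le_min hb0.le (inv_nonneg.mpr hr.1.le)
          · exact min_le_left _ _
      _ = b ^ (p - 3) / 3 := by
          rw [intervalIntegral.integral_const_mul, integral_pow, Real.rpow_sub hb0,
            Real.rpow_ofNat]
          push_cast
          ring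
  · refine intervalIntegral.integral_mono_on_of_le_Ioo hbinv.2 hright
      (intervalIntegral.intervalIntegrable_rpow (.inr ?_)) fun r hr => ?_
    · rw [uIcc_of_le hbinv.2]
      exact fun h => (inv_pos.mpr hb0).not_ge h.1
    · have hr0 : 0 < r := (inv_pos.mpr hb0).trans hr.1
      calc r ^ 2 * min b r⁻¹ ^ p ≤ r ^ 2 * r⁻¹ ^ p := by
            gcongr
            exact min_le_right _ _
        _ = r ^ (2 - p) := by
            rw [Real.inv_rpow hr0.le, Real.rpow_sub hr0, Real.rpow_two, div_eq_mul_inv]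

theorem integral_sq_mul_min_inv_rpow_three_le (hb : 1 ≤ b) :
    ∫ r in (0)..1, r ^ 2 * min b r⁻¹ ^ (3 : ℝ) ≤ 1 / 3 + log b := by
  have hb0 : 0 < b := by linarith
  have htail : ∫ r in b⁻¹..1, r ^ (2 - 3 : ℝ) = log b := by
    simp_rw [show (2 - 3 : ℝ) = -1 by norm_num, Real.rpow_neg_one]
    rw [integral_inv_of_pos (inv_pos.mpr hb0) one_pos, one_div, inv_inv]
  simpa [htail] using integral_sq_mul_min_inv_rpow_le hb (p := 3) (by norm_num)

theorem integral_sq_mul_min_inv_rpow_le_of_three_lt (hb : 1 ≤ b) (hp : 3 < p) :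
    ∫ r in (0)..1, r ^ 2 * min b r⁻¹ ^ p ≤ (1 / 3 + 1 / (p - 3)) * b ^ (p - 3) := by
  have hb0 : 0 < b := by linarith
  have htail : ∫ r in b⁻¹..1, r ^ (2 - p) = (b ^ (p - 3) - 1) / (p - 3) := by
    have h0 : (0 : ℝ) ∉ uIcc b⁻¹ 1 := by
      rw [uIcc_of_le (inv_le_one_of_one_le₀ hb)]
      exact fun h => (inv_pos.mpr hb0).not_ge h.1
    rw [integral_rpow (.inr ⟨by linarith, h0⟩), show 2 - p + 1 = -(p - 3) by ring,
      Real.one_rpow, Real.inv_rpow hb0.le, ← Real.rpow_neg hb0.le, neg_neg, div_neg, ← neg_div,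
      neg_sub]
  calc ∫ r in (0)..1, r ^ 2 * min b r⁻¹ ^ p
      ≤ b ^ (p - 3) / 3 + (b ^ (p - 3) - 1) / (p - 3) :=
        htail ▸ integral_sq_mul_min_inv_rpow_le hb (by linarith)
    _ ≤ b ^ (p - 3) / 3 + b ^ (p - 3) / (p - 3) := by gcongr; linarith
    _ = (1 / 3 + 1 / (p - 3)) * b ^ (p - 3) := by ring

end RadialProfile

theorem abs_en_le {n : ℕ} {x : EuclideanSpace ℝ (Fin 3)} (hx : x ≠ 0) :
    |en n x| ≤ (2 * π) ^ (-(1 : ℝ) / 2) * min (n * π) ‖x‖⁻¹ := by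
  have hc : 0 < (2 * π) ^ (-(1 : ℝ) / 2) := by positivity
  rw [en, if_neg hx, mul_div_assoc, abs_mul, abs_of_pos hc, abs_div, abs_norm]
  gcongr
  exact abs_sin_mul_div_le_min (by positivity) (norm_pos_iff.mpr hx)

theorem exists_lpNormB_en_le {p : ℝ} (hp : 0 < p) :
    ∃ K, 0 ≤ K ∧ ∀ (n : ℕ) (M : ℝ), ∫ r in (0)..1, r ^ 2 * min (n * π) r⁻¹ ^ p ≤ M →
      lpNormB p (fun x => (en n x : ℂ)) ≤ (K * M) ^ (1 / p) := by
  set c : ℝ := (2 * π) ^ (-(1 : ℝ) / 2)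
  refine ⟨3 * volume.real ballB * c ^ p, by positivity, fun n M hM => ?_⟩
  set g : ℝ → ℝ := fun r => c ^ p * min (n * π) r⁻¹ ^ p
  have hg : IntegrableOn (fun x : EuclideanSpace ℝ (Fin 3) => g ‖x‖) ballB := by
    rw [ballB, integrableOn_fun_norm_addHaar, finrank_euclideanSpace_fin]
    refine (IntegrableOn.mono_set ((integrableOn_sq_mul_min_inv_rpow (b := n * π)
      (by positivity) hp.le).const_mul (c ^ p)) Ioo_subset_Icc_self).congr_fun
      (fun r _ => ?_) measurableSet_Ioo
    simp only [g, smul_eq_mul]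
    ring
  have hpointwise : ∀ᵐ x ∂volume.restrict ballB, |en n x| ^ p ≤ g ‖x‖ := by
    filter_upwards [ae_restrict_of_ae (volume.ae_ne 0)] with x hx
    rw [show g ‖x‖ = c ^ p * min (n * π) ‖x‖⁻¹ ^ p from rfl,
      ← Real.mul_rpow (by positivity) (by positivity)]
    exact Real.rpow_le_rpow (abs_nonneg _) (abs_en_le hx) hp.le
  have hint : ∫ x in ballB, |en n x| ^ p ≤ 3 * volume.real ballB * c ^ p * M := by
    calc ∫ x in ballB, |en n x| ^ p ≤ ∫ x in ballB, g ‖x‖ :=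
          integral_mono_of_nonneg (.of_forall fun _ => by positivity) hg hpointwise
      _ = 3 * volume.real ballB * c ^ p * ∫ r in (0)..1, r ^ 2 * min (n * π) r⁻¹ ^ p := by
          rw [ballB, setIntegral_ball_fun_norm_addHaar, finrank_euclideanSpace_fin,
            intervalIntegral.integral_of_le zero_le_one, integral_Ioc_eq_integral_Ioo]
          simp only [g, smul_eq_mul, nsmul_eq_mul, Nat.cast_ofNat, Nat.add_one_sub_one,
            mul_left_comm _ (c ^ p), integral_const_mul]
          ring
      _ ≤ 3 * volume.real ballB * c ^ p * M := by gcongr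
  simpa only [lpNormB, Complex.norm_real, Real.norm_eq_abs] using
    Real.rpow_le_rpow (integral_nonneg fun _ => by positivity) hint (by positivity)

theorem one_third_add_log_mul_pi_le {x : ℝ} (hx : 1 ≤ x) :
    1 / 3 + log (x * π) ≤ 3 * log (x + 1) := by
  have hlog2 : 1 / 3 ≤ log (x + 1) :=
    calc (1 : ℝ) / 3 ≤ log 2 := by linarith [log_two_gt_d9]
      _ ≤ log (x + 1) := log_le_log two_pos (by linarith)
  have hlogpi : log (x * π) ≤ 2 * log (x + 1) :=
    calc log (x * π) ≤ log ((x + 1) ^ 2) :=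
          log_le_log (by positivity) (by nlinarith [pi_lt_four])
      _ = 2 * log (x + 1) := by rw [log_pow, Nat.cast_ofNat]
  linarith

/-- `L^p` bounds for the radial eigenfunctions: `‖e_n‖_{L^p(B)} ≲ 1`
for `p < 3`, `≲ (log(n+1))^{1/3}` for `p = 3`, and `≲ n^{1-3/p}` for `p > 3`. -/
theorem eigenfunction_lp_bounds :
    (∀ p : ℝ, 1 ≤ p → p < 3 → ∃ C : ℝ, ∀ n : ℕ, 1 ≤ n →
      lpNormB p (fun x => (en n x : ℂ)) ≤ C) ∧
    (∃ C : ℝ, ∀ n : ℕ, 1 ≤ n →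
      lpNormB 3 (fun x => (en n x : ℂ)) ≤ C * (Real.log ((n : ℝ) + 1)) ^ ((1:ℝ)/3)) ∧
    (∀ p : ℝ, 3 < p → ∃ C : ℝ, ∀ n : ℕ, 1 ≤ n →
      lpNormB p (fun x => (en n x : ℂ)) ≤ C * (n : ℝ) ^ (1 - 3/p)) := by
  have hfreq : ∀ n : ℕ, 1 ≤ n → 1 ≤ (n : ℝ) * π := fun n hn => by
    nlinarith [pi_gt_three, (Nat.one_le_cast.mpr hn : (1 : ℝ) ≤ n)]
  refine ⟨fun p hp1 hp3 => ?_, ?_, fun p hp3 => ?_⟩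
  · obtain ⟨K, -, hK⟩ := exists_lpNormB_en_le (p := p) (by linarith)
    exact ⟨(K * (3 - p)⁻¹) ^ (1 / p), fun n _ =>
      hK n _ (integral_sq_mul_min_inv_rpow_le_of_lt_three (by positivity) (by linarith) hp3)⟩
  · obtain ⟨K, hK0, hK⟩ := exists_lpNormB_en_le (p := 3) (by norm_num)
    refine ⟨(K * 3) ^ ((1 : ℝ) / 3), fun n hn => ?_⟩
    have hn1 : (1 : ℝ) ≤ n := Nat.one_le_cast.mpr hn
    calc lpNormB 3 (fun x => (en n x : ℂ)) ≤ (K * (3 * log (n + 1))) ^ ((1 : ℝ) / 3) :=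
          hK n _ ((integral_sq_mul_min_inv_rpow_three_le (hfreq n hn)).trans
            (one_third_add_log_mul_pi_le hn1))
      _ = (K * 3) ^ ((1 : ℝ) / 3) * log (n + 1) ^ ((1 : ℝ) / 3) := by
          rw [← mul_assoc, Real.mul_rpow (by positivity) (log_nonneg (by linarith))]
  · obtain ⟨K, hK0, hK⟩ := exists_lpNormB_en_le (p := p) (by linarith)
    refine ⟨(K * (1 / 3 + 1 / (p - 3))) ^ (1 / p) * π ^ (1 - 3 / p), fun n hn => ?_⟩
    calc lpNormB p (fun x => (en n x : ℂ))
        ≤ (K * ((1 / 3 + 1 / (p - 3)) * (n * π) ^ (p - 3))) ^ (1 / p) :=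
          hK n _ (integral_sq_mul_min_inv_rpow_le_of_three_lt (hfreq n hn) hp3)
      _ = (K * (1 / 3 + 1 / (p - 3))) ^ (1 / p) * π ^ (1 - 3 / p) * n ^ (1 - 3 / p) := by
          rw [← mul_assoc, Real.mul_rpow (by positivity) (by positivity),
            ← Real.rpow_mul (by positivity), show (p - 3) * (1 / p) = 1 - 3 / p by field_simp,
            Real.mul_rpow (by positivity) pi_pos.le]
          ring
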